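/- arXiv:2209.07097 — 3 statements merged into one kernel-verified Lean document; each statement's English description precedes it below -/
import Mathlib

section
/- Let M > 0, δ > 0, and F < Fsing_M(δ) where Fsing_M(δ) = Mδ for 0 < δ ≤ 2M and Fsing_M(δ) = M² + δ²/4 for δ > 2M. Then the function F ↦ ∫₀² dx/√(x(2−x)(M²x² − 2Fx + δ²)) is well-defined (the polynomial M²x² − 2Fx + δ² is strictly positive on (0,2)) and strictly increasing in F. -/
/-!
Write `Q_F(x) = M²x² − 2Fx + δ²`. Below `Fsing` it is positive on `[0, 2]`: for `δ ≤ 2M` because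
`Q_F(x) = (Mx − δ)² + 2(Mδ − F)x`, and for `δ > 2M` because `Q_F(x) > (2 − x)(δ²/2 − M²x)`.
Being continuous, it is then bounded below by some `m > 0`, so the integrand is dominated by
`m^{-1/2} (x^{-1/2} + (2 − x)^{-1/2})` and is integrable. For `x > 0`, `Q_F(x)` is strictly
decreasing in `F`, hence the integrand and the integral are strictly increasing.
-/

open Set MeasureTheory intervalIntegral

lemma quadratic_pos_of_lt_Fsing {M δ F x : ℝ} (hM : 0 < M) (hδ : 0 < δ)
    (hF : F < if δ ≤ 2 * M then M * δ else M ^ 2 + δ ^ 2 / 4) (hx : x ∈ Icc (0 : ℝ) 2) :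
    0 < M ^ 2 * x ^ 2 - 2 * F * x + δ ^ 2 := by
  obtain ⟨hx0, hx2⟩ := hx
  rcases hx0.eq_or_lt with rfl | hx0
  · simpa using pow_pos hδ 2
  split_ifs at hF with hδM
  · nlinarith [sq_nonneg (M * x - δ)]
  · rcases hx2.eq_or_lt with rfl | hx2
    · nlinarith
    · nlinarith [mul_pos (sub_pos.mpr hx2) (show 0 < δ ^ 2 - 2 * M ^ 2 * x by nlinarith)]

lemma one_div_sqrt_le_of_mul_le {m t p : ℝ} (hm : 0 < m) (ht : 0 < t) (h : m * t ≤ p) :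
    1 / √p ≤ (√m)⁻¹ * t ^ (-(1 / 2) : ℝ) := by
  calc 1 / √p ≤ 1 / √(m * t) := one_div_le_one_div_of_le (by positivity) (Real.sqrt_le_sqrt h)
    _ = (√m)⁻¹ * t ^ (-(1 / 2) : ℝ) := by
      rw [Real.sqrt_mul hm.le, Real.rpow_neg ht.le, ← Real.sqrt_eq_rpow]
      field_simp

lemma intervalIntegrable_rpow_neg_half_add : IntervalIntegrable
    (fun x : ℝ => x ^ (-(1 / 2) : ℝ) + (2 - x) ^ (-(1 / 2) : ℝ)) volume 0 2 := by
  have h : IntervalIntegrable (fun x : ℝ => x ^ (-(1 / 2) : ℝ)) volume 0 2 :=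
    intervalIntegrable_rpow' (by norm_num)
  refine h.add ?_
  simpa using (h.comp_sub_left 2).symm

lemma one_div_sqrt_le_rpow_neg_half_add {m q x : ℝ} (hm : 0 < m) (hmq : m ≤ q)
    (hx : x ∈ Ioo (0 : ℝ) 2) :
    1 / √(x * (2 - x) * q) ≤ (√m)⁻¹ * (x ^ (-(1 / 2) : ℝ) + (2 - x) ^ (-(1 / 2) : ℝ)) := by
  obtain ⟨hx0, hx2⟩ := hx
  have hx' : 0 < 2 - x := by linarith
  have hqm := mul_nonneg (mul_nonneg hx0.le hx'.le) (sub_nonneg.mpr hmq)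
  rw [mul_add]
  rcases le_total x 1 with hx1 | hx1
  · have := one_div_sqrt_le_of_mul_le hm hx0
      (by nlinarith [mul_nonneg (mul_nonneg hm.le hx0.le) (sub_nonneg.mpr hx1)] :
        m * x ≤ x * (2 - x) * q)
    have : 0 ≤ (√m)⁻¹ * (2 - x) ^ (-(1 / 2) : ℝ) := by positivity
    linarith
  · have := one_div_sqrt_le_of_mul_le hm hx'
      (by nlinarith [mul_nonneg (mul_nonneg hm.le hx'.le) (sub_nonneg.mpr hx1)] :
        m * (2 - x) ≤ x * (2 - x) * q)
    have : 0 ≤ (√m)⁻¹ * x ^ (-(1 / 2) : ℝ) := by positivity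
    linarith

lemma intervalIntegrable_one_div_sqrt {Q : ℝ → ℝ} (hQ : Continuous Q)
    (hpos : ∀ x ∈ Icc (0 : ℝ) 2, 0 < Q x) :
    IntervalIntegrable (fun x => 1 / √(x * (2 - x) * Q x)) volume 0 2 := by
  obtain ⟨x₀, hx₀, hmin⟩ :=
    isCompact_Icc.exists_isMinOn (nonempty_Icc.mpr zero_le_two) hQ.continuousOn
  refine (intervalIntegrable_rpow_neg_half_add.const_mul (√(Q x₀))⁻¹).mono_fun' ?_ ?_
  · exact (measurable_const.div (Real.continuous_sqrt.measurable.comp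
      (by fun_prop))).aestronglyMeasurable
  rw [uIoc_of_le zero_le_two, ← Measure.restrict_congr_set Ioo_ae_eq_Ioc]
  filter_upwards [ae_restrict_mem measurableSet_Ioo] with x hx
  rw [Real.norm_of_nonneg (by positivity)]
  exact one_div_sqrt_le_rpow_neg_half_add (hpos x₀ hx₀) (hmin (Ioo_subset_Icc_self hx)) hx

lemma integral_one_div_sqrt_lt {Q₁ Q₂ : ℝ → ℝ} (hQ₁ : Continuous Q₁) (hQ₂ : Continuous Q₂)
    (hpos₁ : ∀ x ∈ Icc (0 : ℝ) 2, 0 < Q₁ x) (hpos₂ : ∀ x ∈ Icc (0 : ℝ) 2, 0 < Q₂ x)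
    (hlt : ∀ x ∈ Ioo (0 : ℝ) 2, Q₂ x < Q₁ x) :
    ∫ x in (0 : ℝ)..2, 1 / √(x * (2 - x) * Q₁ x) <
      ∫ x in (0 : ℝ)..2, 1 / √(x * (2 - x) * Q₂ x) := by
  have hi₁ := intervalIntegrable_one_div_sqrt hQ₁ hpos₁
  have hi₂ := intervalIntegrable_one_div_sqrt hQ₂ hpos₂
  rw [← sub_pos, ← integral_sub hi₂ hi₁]
  refine intervalIntegral_pos_of_pos_on (hi₂.sub hi₁) (fun x hx => ?_) two_pos
  obtain ⟨hx0, hx2⟩ := hx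
  have hp₂ : 0 < x * (2 - x) * Q₂ x := by
    have := hpos₂ x ⟨hx0.le, hx2.le⟩
    have : 0 < 2 - x := by linarith
    positivity
  have hp : x * (2 - x) * Q₂ x < x * (2 - x) * Q₁ x :=
    mul_lt_mul_of_pos_left (hlt x ⟨hx0, hx2⟩) (mul_pos hx0 (by linarith))
  exact sub_pos.mpr <|
    one_div_lt_one_div_of_lt (Real.sqrt_pos.mpr hp₂) (Real.sqrt_lt_sqrt hp₂.le hp)

/-- Below the singular line `Fsing_M(δ)`, the quadratic `M²x² − 2Fx + δ²` is
strictly positive on `(0,2)`, and the period integral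
`F ↦ ∫₀² dx/√(x(2−x)(M²x² − 2Fx + δ²))` is strictly increasing in `F`. -/
theorem period_Tdown_monotone (M δ : ℝ) (hM : 0 < M) (hδ : 0 < δ) :
    let Fsing : ℝ := if δ ≤ 2 * M then M * δ else M ^ 2 + δ ^ 2 / 4
    (∀ F < Fsing, ∀ x ∈ Set.Ioo (0 : ℝ) 2, 0 < M ^ 2 * x ^ 2 - 2 * F * x + δ ^ 2) ∧
    StrictMonoOn (fun F : ℝ =>
        ∫ x in (0 : ℝ)..2,
          1 / Real.sqrt (x * (2 - x) * (M ^ 2 * x ^ 2 - 2 * F * x + δ ^ 2)))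
      (Set.Iio Fsing) := by
  intro Fsing
  refine ⟨fun F hF x hx => quadratic_pos_of_lt_Fsing hM hδ hF (Ioo_subset_Icc_self hx), ?_⟩
  intro F₁ hF₁ F₂ hF₂ hF
  exact integral_one_div_sqrt_lt (by fun_prop) (by fun_prop)
    (fun x hx => quadratic_pos_of_lt_Fsing hM hδ hF₁ hx)
    (fun x hx => quadratic_pos_of_lt_Fsing hM hδ hF₂ hx)
    (fun x hx => by nlinarith [hx.1])
end

section
/- Let M > 0, δ > 0 with 0 < δ ≤ 2M. As F → (Mδ)⁻, the integral ∫₀² dx/√(x(2−x)(M²x² − 2Fx + δ²)) tends to +∞. -/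
/-!
Write `t = F / M`. Completing the square, `M²x² − 2Fx + δ² = (Mx − t)² + s²` with
`s = √(δ² − t²)`, and since `x(2 − x) ≤ 1` on `[0, 2]` the integral is at least
`∫₀² dx / √((Mx − t)² + s²) = (arsinh((2M − t)/s) + arsinh(t/s)) / M`.
For `t ≤ 2M` the first term is nonnegative, and as `F → (Mδ)⁻` we have `t → δ⁻`,
`s → 0⁺`, so `arsinh(t/s) → ∞`.
-/

open Filter Real Set Topology MeasureTheory

theorem hasDerivAt_arsinh_div_sqrt (M t s x : ℝ) (hM : M ≠ 0) (hs : 0 < s) :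
    HasDerivAt (fun y => arsinh ((M * y - t) / s) / M) (1 / √((M * x - t) ^ 2 + s ^ 2)) x := by
  have hlin : HasDerivAt (fun y => (M * y - t) / s) (M / s) x := by
    simpa using (((hasDerivAt_id x).const_mul M).sub_const t).div_const s
  refine (hlin.arsinh.div_const M).congr_deriv ?_
  have hscale : √((M * x - t) ^ 2 + s ^ 2) = s * √(1 + ((M * x - t) / s) ^ 2) := by
    rw [← sqrt_sq hs.le, ← sqrt_mul (sq_nonneg s), sqrt_sq hs.le]
    congr 1
    field_simp
    ring
  have : 0 < √(1 + ((M * x - t) / s) ^ 2) := sqrt_pos.2 (by positivity)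
  rw [smul_eq_mul, hscale]
  field_simp

theorem integral_one_div_sqrt_sq_add_sq (a b M t s : ℝ) (hM : M ≠ 0) (hs : 0 < s) :
    ∫ x in a..b, 1 / √((M * x - t) ^ 2 + s ^ 2) =
      (arsinh ((M * b - t) / s) - arsinh ((M * a - t) / s)) / M := by
  have hcont : Continuous fun x => 1 / √((M * x - t) ^ 2 + s ^ 2) :=
    continuous_const.div (by fun_prop) fun x => (sqrt_pos.2 (by positivity)).ne'
  rw [intervalIntegral.integral_eq_sub_of_hasDerivAt
    (fun x _ => hasDerivAt_arsinh_div_sqrt M t s x hM hs) (hcont.intervalIntegrable a b)]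
  ring

theorem intervalIntegrable_one_div_sqrt_mul_two_sub :
    IntervalIntegrable (fun x : ℝ => 1 / √(x * (2 - x))) volume 0 2 := by
  have h := Polynomial.Chebyshev.intervalIntegrable_sqrt_one_sub_sq_inv.comp_sub_right 1
  norm_num at h
  convert h using 2 with x
  rw [one_div]
  ring_nf

theorem integral_le_integral_div_sqrt_mul_two_sub {g : ℝ → ℝ} (hg : ContinuousOn g (Icc 0 2))
    (hg0 : ∀ x ∈ Icc (0 : ℝ) 2, 0 ≤ g x) :
    ∫ x in (0 : ℝ)..2, g x ≤ ∫ x in (0 : ℝ)..2, g x * (1 / √(x * (2 - x))) := by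
  have hg' : ContinuousOn g (uIcc 0 2) := by rwa [uIcc_of_le zero_le_two]
  refine intervalIntegral.integral_mono_on_of_le_Ioo zero_le_two
    hg'.intervalIntegrable (intervalIntegrable_one_div_sqrt_mul_two_sub.continuousOn_mul hg')
    fun x hx => ?_
  have hw : 0 < x * (2 - x) := mul_pos hx.1 (by linarith [hx.2])
  have hw1 : √(x * (2 - x)) ≤ 1 := sqrt_le_one.2 (by nlinarith [sq_nonneg (x - 1)])
  exact le_mul_of_one_le_right (hg0 x (Ioo_subset_Icc_self hx))
    (one_le_one_div (sqrt_pos.2 hw) hw1)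

theorem tendsto_div_sqrt_sq_sub_sq {δ : ℝ} (hδ : 0 < δ) :
    Tendsto (fun t => t / √(δ ^ 2 - t ^ 2)) (𝓝[<] δ) atTop := by
  have hsqrt : Tendsto (fun t => √(δ ^ 2 - t ^ 2)) (𝓝[<] δ) (𝓝[>] 0) := by
    refine tendsto_nhdsWithin_iff.2 ⟨?_, ?_⟩
    · have : Continuous fun t : ℝ => √(δ ^ 2 - t ^ 2) := by fun_prop
      simpa using (this.tendsto δ).mono_left nhdsWithin_le_nhds
    · filter_upwards [Ioo_mem_nhdsLT hδ] with t ht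
      exact sqrt_pos.2 (by nlinarith [ht.1, ht.2])
  exact (tendsto_nhdsWithin_of_tendsto_nhds tendsto_id).pos_mul_atTop hδ
    (tendsto_inv_nhdsGT_zero.comp hsqrt)

theorem tendsto_arsinh_atTop : Tendsto arsinh atTop atTop :=
  sinhOrderIso.symm.tendsto_atTop

theorem arsinh_div_le_integral {M δ F : ℝ} (hM : 0 < M) (hF : F ≤ 2 * M ^ 2)
    (hFδ : (F / M) ^ 2 < δ ^ 2) :
    arsinh (F / M / √(δ ^ 2 - (F / M) ^ 2)) / M ≤
      ∫ x in (0 : ℝ)..2, 1 / √(x * (2 - x) * (M ^ 2 * x ^ 2 - 2 * F * x + δ ^ 2)) := by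
  set t := F / M
  set s := √(δ ^ 2 - t ^ 2)
  have hs : 0 < s := sqrt_pos.2 (sub_pos.2 hFδ)
  have hq : ∀ x, 0 < (M * x - t) ^ 2 + s ^ 2 := fun x => by positivity
  have hsq : ∀ x, M ^ 2 * x ^ 2 - 2 * F * x + δ ^ 2 = (M * x - t) ^ 2 + s ^ 2 := fun x => by
    have hMt : M * t = F := mul_div_cancel₀ F hM.ne'
    rw [sq_sqrt (sub_pos.2 hFδ).le]
    linear_combination (2 * x) * hMt
  have ht : t ≤ M * 2 := by rw [div_le_iff₀ hM]; nlinarith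
  calc arsinh (t / s) / M
      ≤ (arsinh ((M * 2 - t) / s) - arsinh ((M * 0 - t) / s)) / M := by
        rw [mul_zero, zero_sub, neg_div, arsinh_neg, sub_neg_eq_add]
        gcongr
        exact le_add_of_nonneg_left (arsinh_nonneg_iff.2 (div_nonneg (sub_nonneg.2 ht) hs.le))
    _ = ∫ x in (0 : ℝ)..2, 1 / √((M * x - t) ^ 2 + s ^ 2) :=
        (integral_one_div_sqrt_sq_add_sq 0 2 M t s hM.ne' hs).symm
    _ ≤ ∫ x in (0 : ℝ)..2, 1 / √((M * x - t) ^ 2 + s ^ 2) * (1 / √(x * (2 - x))) :=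
        integral_le_integral_div_sqrt_mul_two_sub
          (continuous_const.div (by fun_prop) fun x => (sqrt_pos.2 (hq x)).ne').continuousOn
          fun x _ => by positivity
    _ = _ := intervalIntegral.integral_congr fun x _ => by
        rw [hsq, sqrt_mul' _ (hq x).le, one_div_mul_one_div, mul_comm]

/-- For `0 < δ ≤ 2M`, the integral `∫₀² dx/√(x(2−x)(M²x² − 2Fx + δ²))` tends
to `+∞` as `F → (Mδ)⁻`. -/
theorem period_Tdown_diverges_at_singular_line (M δ : ℝ)
    (hM : 0 < M) (hδ : 0 < δ) (hδ2M : δ ≤ 2 * M) :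
    Tendsto (fun F : ℝ =>
        ∫ x in (0 : ℝ)..2,
          1 / Real.sqrt (x * (2 - x) * (M ^ 2 * x ^ 2 - 2 * F * x + δ ^ 2)))
      (nhdsWithin (M * δ) (Set.Iio (M * δ))) atTop := by
  have hscale : Tendsto (fun F => F / M) (𝓝[<] (M * δ)) (𝓝[<] δ) := by
    refine tendsto_nhdsWithin_iff.2 ⟨?_, ?_⟩
    · simpa [hM.ne'] using ((continuous_id.div_const M).tendsto (M * δ)).mono_left
        nhdsWithin_le_nhds
    · filter_upwards [self_mem_nhdsWithin] with F hF
      exact (div_lt_iff₀' hM).2 hF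
  have hbound : Tendsto (fun t => arsinh (t / √(δ ^ 2 - t ^ 2)) / M) (𝓝[<] δ) atTop :=
    (tendsto_arsinh_atTop.comp (tendsto_div_sqrt_sq_sub_sq hδ)).atTop_div_const hM
  refine tendsto_atTop_mono' _ ?_ (hbound.comp hscale)
  filter_upwards [Ioo_mem_nhdsLT (mul_pos hM hδ)] with F ⟨hF0, hFδ⟩
  have ht0 : 0 < F / M := div_pos hF0 hM
  have htδ : F / M < δ := (div_lt_iff₀' hM).2 hFδ
  exact arsinh_div_le_integral hM (by nlinarith) (by nlinarith)
end

section
/- Let M > 0, δ > 0, F > Fsing_M(δ). The function F ↦ ∫₀¹ dt/√(M² t(1−t)(2 − x₋(F) t)(x₊(F) − x₋(F) t)) is strictly decreasing in F, where x₋(F) < x₊(F) are the roots of M²x² − 2Fx + δ². -/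
/-!
Write `x₋ < x₊` for the roots of `M²x² − 2Fx + δ²`. Above `Fsing`, the discriminant is positive,
`0 < x₋ < 2` and `x₋ < x₊`, so every factor of `M²t(1−t)(2 − x₋t)(x₊ − x₋t)` is positive on
`(0, 1)`. As `F` grows, `x₊` increases and `x₋ = δ²/(M²x₊)` decreases, so that product increases
pointwise and the integrand decreases strictly. The integrand is integrable because it is
dominated by a multiple of `1/√(t(1−t)) ≤ t^(-1/2) + (1−t)^(-1/2)`.
-/

open MeasureTheory Set intervalIntegral

noncomputable def Fsing (M δ : ℝ) : ℝ := if δ ≤ 2 * M then M * δ else M ^ 2 + δ ^ 2 / 4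

noncomputable def xMinus (M δ F : ℝ) : ℝ := F / M ^ 2 - √(F ^ 2 / M ^ 4 - δ ^ 2 / M ^ 2)

noncomputable def xPlus (M δ F : ℝ) : ℝ := F / M ^ 2 + √(F ^ 2 / M ^ 4 - δ ^ 2 / M ^ 2)

noncomputable def periodIntegrand (M c d t : ℝ) : ℝ :=
  1 / √(M ^ 2 * t * (1 - t) * (2 - c * t) * (d - c * t))

lemma IntervalIntegrable.mono_fun_of_forall_Ioo {f g : ℝ → ℝ} {a b : ℝ} (hab : a ≤ b)
    (hg : IntervalIntegrable g volume a b) (hf : Measurable f)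
    (hle : ∀ t ∈ Ioo a b, ‖f t‖ ≤ g t) : IntervalIntegrable f volume a b := by
  refine hg.mono_fun' hf.aestronglyMeasurable ?_
  rw [uIoc_of_le hab, ← Measure.restrict_congr_set Ioo_ae_eq_Ioc]
  filter_upwards [ae_restrict_mem measurableSet_Ioo] using hle

lemma one_div_sqrt_mul_one_sub_le {t : ℝ} (ht : t ∈ Ioo (0 : ℝ) 1) :
    1 / √(t * (1 - t)) ≤ t ^ (-(1 / 2) : ℝ) + (1 - t) ^ (-(1 / 2) : ℝ) := by
  obtain ⟨ht₀, ht₁⟩ := ht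
  set a := √t
  set b := √(1 - t)
  have ha : 0 < a := Real.sqrt_pos.2 ht₀
  have hb : 0 < b := Real.sqrt_pos.2 (sub_pos.2 ht₁)
  have hab : a ^ 2 + b ^ 2 = 1 := by
    rw [Real.sq_sqrt ht₀.le, Real.sq_sqrt (sub_pos.2 ht₁).le]; ring
  -- `a ^ 2 + b ^ 2 = 1` forces `1 ≤ a + b`, i.e. `1 / (a * b) ≤ 1 / a + 1 / b`
  have hsum : 1 ≤ a + b := by nlinarith
  rw [Real.rpow_neg ht₀.le, Real.rpow_neg (sub_pos.2 ht₁).le, ← Real.sqrt_eq_rpow,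
    ← Real.sqrt_eq_rpow, Real.sqrt_mul ht₀.le, div_le_iff₀ (by positivity)]
  field_simp
  linarith

lemma intervalIntegrable_one_div_sqrt_mul_one_sub :
    IntervalIntegrable (fun t : ℝ => 1 / √(t * (1 - t))) volume 0 1 := by
  have h₀ : IntervalIntegrable (fun t : ℝ => t ^ (-(1 / 2) : ℝ)) volume 0 1 :=
    intervalIntegrable_rpow' (by norm_num)
  have h₁ : IntervalIntegrable (fun t : ℝ => (1 - t) ^ (-(1 / 2) : ℝ)) volume 0 1 := by
    simpa using (h₀.comp_sub_left 1).symm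
  refine (h₀.add h₁).mono_fun_of_forall_Ioo zero_le_one (by fun_prop) fun t ht => ?_
  rw [Real.norm_of_nonneg (by positivity)]
  exact one_div_sqrt_mul_one_sub_le ht

lemma intervalIntegrable_periodIntegrand {M c d : ℝ} (hM : M ≠ 0) (hc₀ : 0 ≤ c) (hc₂ : c < 2)
    (hcd : c < d) : IntervalIntegrable (periodIntegrand M c d) volume 0 1 := by
  set m := M ^ 2 * (2 - c) * (d - c)
  have hm : 0 < m := by have := sub_pos.2 hc₂; have := sub_pos.2 hcd; positivity
  refine (intervalIntegrable_one_div_sqrt_mul_one_sub.const_mul (1 / √m)).mono_fun_of_forall_Ioo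
    zero_le_one (by unfold periodIntegrand; fun_prop) fun t ⟨ht₀, ht₁⟩ => ?_
  have hct : c * t ≤ c := mul_le_of_le_one_right hc₀ ht₁.le
  have hmt : m ≤ M ^ 2 * (2 - c * t) * (d - c * t) := by
    have : 0 ≤ 2 - c := by linarith
    have : 0 ≤ d - c := by linarith
    gcongr ?_ * ?_ * ?_ <;> nlinarith [sq_nonneg M]
  have htt : 0 < t * (1 - t) := mul_pos ht₀ (sub_pos.2 ht₁)
  rw [Real.norm_of_nonneg (by unfold periodIntegrand; positivity), one_div_mul_one_div,
    ← Real.sqrt_mul hm.le, periodIntegrand]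
  apply one_div_le_one_div_of_le (by positivity) (Real.sqrt_le_sqrt ?_)
  nlinarith

lemma periodIntegrand_lt_periodIntegrand {M c₁ d₁ c₂ d₂ t : ℝ} (hM : M ≠ 0) (ht : t ∈ Ioo 0 1)
    (hc₁ : 0 ≤ c₁) (hc₁₂ : c₁ < 2) (hcd₁ : c₁ < d₁) (hc : c₂ < c₁) (hd : d₁ ≤ d₂) :
    periodIntegrand M c₂ d₂ t < periodIntegrand M c₁ d₁ t := by
  obtain ⟨ht₀, ht₁⟩ := ht
  have hA : 0 < M ^ 2 * t * (1 - t) := by have := sub_pos.2 ht₁; positivity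
  have hct : c₁ * t ≤ c₁ := mul_le_of_le_one_right hc₁ ht₁.le
  have hB : 0 < 2 - c₁ * t := by linarith
  have hC : 0 < d₁ - c₁ * t := by linarith
  have hBC : (2 - c₁ * t) * (d₁ - c₁ * t) < (2 - c₂ * t) * (d₂ - c₂ * t) := by
    have : c₂ * t < c₁ * t := mul_lt_mul_of_pos_right hc ht₀
    exact mul_lt_mul'' (by linarith) (by linarith) hB.le hC.le
  apply one_div_lt_one_div_of_lt (by positivity) (Real.sqrt_lt_sqrt (by positivity) ?_)
  simpa only [mul_assoc] using mul_lt_mul_of_pos_left hBC hA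

lemma integral_periodIntegrand_lt {M c₁ d₁ c₂ d₂ : ℝ} (hM : M ≠ 0) (hc₂ : 0 ≤ c₂)
    (hc₁₂ : c₁ < 2) (hcd₁ : c₁ < d₁) (hc : c₂ < c₁) (hd : d₁ ≤ d₂) :
    ∫ t in 0..1, periodIntegrand M c₂ d₂ t < ∫ t in 0..1, periodIntegrand M c₁ d₁ t := by
  have h₁ := intervalIntegrable_periodIntegrand hM (hc₂.trans hc.le) hc₁₂ hcd₁
  have h₂ := intervalIntegrable_periodIntegrand hM hc₂ (hc.trans hc₁₂) (by linarith)
  rw [← sub_pos, ← integral_sub h₁ h₂]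
  exact intervalIntegral_pos_of_pos_on (h₁.sub h₂) (fun t ht => sub_pos.2 <|
    periodIntegrand_lt_periodIntegrand hM ht (hc₂.trans hc.le) hc₁₂ hcd₁ hc hd) one_pos

section Roots

variable {M δ F : ℝ}

lemma mul_le_Fsing : M * δ ≤ Fsing M δ := by
  unfold Fsing
  split_ifs
  · rfl
  · nlinarith [sq_nonneg (M - δ / 2)]

lemma discr_pos (hM : 0 < M) (hδ : 0 ≤ δ) (hF : M * δ < F) :
    0 < F ^ 2 / M ^ 4 - δ ^ 2 / M ^ 2 := by
  have h : F ^ 2 / M ^ 4 - δ ^ 2 / M ^ 2 = (F ^ 2 - (M * δ) ^ 2) / M ^ 4 := by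
    field_simp
  rw [h]
  have := mul_nonneg hM.le hδ
  exact div_pos (by nlinarith) (by positivity)

lemma xMinus_lt_xPlus (hM : 0 < M) (hδ : 0 ≤ δ) (hF : M * δ < F) :
    xMinus M δ F < xPlus M δ F := by
  have := Real.sqrt_pos.2 (discr_pos hM hδ hF)
  unfold xMinus xPlus
  linarith

lemma xPlus_pos (hM : 0 < M) (hδ : 0 ≤ δ) (hF : M * δ < F) : 0 < xPlus M δ F := by
  have : 0 < F := (mul_nonneg hM.le hδ).trans_lt hF
  unfold xPlus
  positivity

lemma xMinus_mul_xPlus (hM : 0 < M) (hδ : 0 ≤ δ) (hF : M * δ < F) :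
    xMinus M δ F * xPlus M δ F = δ ^ 2 / M ^ 2 := by
  calc xMinus M δ F * xPlus M δ F
      = (F / M ^ 2) ^ 2 - √(F ^ 2 / M ^ 4 - δ ^ 2 / M ^ 2) ^ 2 := by
        unfold xMinus xPlus; ring
    _ = δ ^ 2 / M ^ 2 := by
        rw [Real.sq_sqrt (discr_pos hM hδ hF).le]; field_simp; ring

lemma xMinus_eq_div (hM : 0 < M) (hδ : 0 ≤ δ) (hF : M * δ < F) :
    xMinus M δ F = δ ^ 2 / M ^ 2 / xPlus M δ F :=
  eq_div_of_mul_eq (xPlus_pos hM hδ hF).ne' (xMinus_mul_xPlus hM hδ hF)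

lemma xMinus_pos (hM : 0 < M) (hδ : 0 < δ) (hF : M * δ < F) : 0 < xMinus M δ F := by
  rw [xMinus_eq_div hM hδ.le hF]
  have := xPlus_pos hM hδ.le hF
  positivity

lemma strictMonoOn_xPlus (hM : 0 < M) (hδ : 0 ≤ δ) : StrictMonoOn (xPlus M δ) (Ioi (M * δ)) := by
  intro F₁ hF₁ F₂ _ h
  have : 0 ≤ F₁ := (mul_nonneg hM.le hδ).trans (le_of_lt hF₁)
  unfold xPlus
  gcongr
  exact (discr_pos hM hδ hF₁).le

lemma strictAntiOn_xMinus (hM : 0 < M) (hδ : 0 < δ) : StrictAntiOn (xMinus M δ) (Ioi (M * δ)) := by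
  intro F₁ hF₁ F₂ hF₂ h
  rw [xMinus_eq_div hM hδ.le hF₁, xMinus_eq_div hM hδ.le hF₂]
  have := xPlus_pos hM hδ.le hF₁
  gcongr
  exact strictMonoOn_xPlus hM hδ.le hF₁ hF₂ h

lemma xMinus_lt_two (hM : 0 < M) (hδ : 0 ≤ δ) (hF : Fsing M δ < F) : xMinus M δ F < 2 := by
  have hD := discr_pos hM hδ (mul_le_Fsing.trans_lt hF)
  unfold xMinus
  rcases le_or_gt F (2 * M ^ 2) with hF₂ | hF₂
  · have : F / M ^ 2 ≤ 2 := by rwa [div_le_iff₀ (by positivity)]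
    linarith [Real.sqrt_pos.2 hD]
  · have hF' : M ^ 2 + δ ^ 2 / 4 < F := by
      unfold Fsing at hF
      split_ifs at hF
      · nlinarith
      · exact hF
    have h₀ : 0 ≤ F / M ^ 2 - 2 := by rw [sub_nonneg, le_div_iff₀ (by positivity)]; linarith
    -- `2` lies strictly between the roots, as the quadratic is negative there
    have h : (F / M ^ 2 - 2) ^ 2 < F ^ 2 / M ^ 4 - δ ^ 2 / M ^ 2 := by
      rw [← sub_neg]
      have e : (F / M ^ 2 - 2) ^ 2 - (F ^ 2 / M ^ 4 - δ ^ 2 / M ^ 2)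
          = (4 * M ^ 2 + δ ^ 2 - 4 * F) / M ^ 2 := by field_simp; ring
      rw [e]
      exact div_neg_of_neg_of_pos (by linarith) (by positivity)
    linarith [(Real.lt_sqrt h₀).2 h]

end Roots

/-- Above the singular line, the period integral
`F ↦ ∫₀¹ dt/√(M²t(1−t)(2 − x₋(F)t)(x₊(F) − x₋(F)t))` is strictly decreasing
in `F`, where `x₋(F) < x₊(F)` are the roots of `M²x² − 2Fx + δ²`. -/
theorem period_Tup_antitone (M δ : ℝ) (hM : 0 < M) (hδ : 0 < δ) :
    let Fsing : ℝ := if δ ≤ 2 * M then M * δ else M ^ 2 + δ ^ 2 / 4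
    let xm : ℝ → ℝ := fun F => F / M ^ 2 - Real.sqrt (F ^ 2 / M ^ 4 - δ ^ 2 / M ^ 2)
    let xp : ℝ → ℝ := fun F => F / M ^ 2 + Real.sqrt (F ^ 2 / M ^ 4 - δ ^ 2 / M ^ 2)
    StrictAntiOn (fun F : ℝ =>
        ∫ t in (0 : ℝ)..1,
          1 / Real.sqrt (M ^ 2 * t * (1 - t) * (2 - xm F * t) * (xp F - xm F * t)))
      (Set.Ioi Fsing) := by
  intro _ _ _
  show StrictAntiOn (fun F => ∫ t in 0..1, periodIntegrand M (xMinus M δ F) (xPlus M δ F) t)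
    (Ioi (Fsing M δ))
  intro F₁ hF₁ F₂ hF₂ h
  have hF₁' : M * δ < F₁ := mul_le_Fsing.trans_lt hF₁
  have hF₂' : M * δ < F₂ := mul_le_Fsing.trans_lt hF₂
  exact integral_periodIntegrand_lt hM.ne' (xMinus_pos hM hδ hF₂').le (xMinus_lt_two hM hδ.le hF₁)
    (xMinus_lt_xPlus hM hδ.le hF₁') (strictAntiOn_xMinus hM hδ hF₁' hF₂' h)
    (strictMonoOn_xPlus hM hδ.le hF₁' hF₂' h).le
end
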